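/- For a finite connected graph G=(V,E) with unit resistances and distinct vertices u, v, the effective resistance between u and v equals 2/λ₂(G,{u,v}). -/

import Mathlib

/-!
Antisymmetric boundary data `(t, -t)` on `{u, v}` and potentials with `f u = 1`, `f v = 0`
correspond under the affine change `f = g / (2 t) + 1/2`, which multiplies the energy by
`1 / (4 t²)` while the boundary norm is `2 t²`. Hence the set of Steklov Rayleigh quotients is
exactly twice the set of Dirichlet energies, so `λ₂ = 2 / R_eff`.
-/

open Finset

variable {V : Type*}

noncomputable def energy [Fintype V] (G : SimpleGraph V) [DecidableRel G.Adj]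
    (f : V → ℝ) : ℝ :=
  (∑ x, ∑ y, if G.Adj x y then (f x - f y) ^ 2 else 0) / 2

noncomputable def lambda2 [Fintype V] (G : SimpleGraph V) [DecidableRel G.Adj]
    (Ω : Finset V) : ℝ :=
  sInf {r : ℝ | ∃ f : V → ℝ, (∑ x ∈ Ω, f x) = 0 ∧ (∃ x ∈ Ω, f x ≠ 0) ∧
    r = energy G f / ∑ x ∈ Ω, (f x) ^ 2}

/-- The effective resistance between `u` and `v` in a unit electrical network,
i.e. the inverse of the minimal Dirichlet energy among potentials with
`f u = 1`, `f v = 0`. -/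
noncomputable def effRes [Fintype V] (G : SimpleGraph V) [DecidableRel G.Adj]
    (u v : V) : ℝ :=
  (sInf {r : ℝ | ∃ f : V → ℝ, f u = 1 ∧ f v = 0 ∧ r = energy G f})⁻¹

open Pointwise

section
variable [Fintype V] (G : SimpleGraph V) [DecidableRel G.Adj]

def dirichletEnergySet (u v : V) : Set ℝ :=
  {r : ℝ | ∃ f : V → ℝ, f u = 1 ∧ f v = 0 ∧ r = energy G f}

def steklovQuotientSet (Ω : Finset V) : Set ℝ :=
  {r : ℝ | ∃ f : V → ℝ, (∑ x ∈ Ω, f x) = 0 ∧ (∃ x ∈ Ω, f x ≠ 0) ∧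
    r = energy G f / ∑ x ∈ Ω, (f x) ^ 2}

theorem effRes_eq_inv_sInf (u v : V) : effRes G u v = (sInf (dirichletEnergySet G u v))⁻¹ :=
  rfl

theorem lambda2_eq_sInf (Ω : Finset V) : lambda2 G Ω = sInf (steklovQuotientSet G Ω) :=
  rfl

theorem energy_affine (a b : ℝ) (g : V → ℝ) :
    energy G (fun x => a * g x + b) = a ^ 2 * energy G g := by
  have hterm : ∀ x y : V, (if G.Adj x y then ((a * g x + b) - (a * g y + b)) ^ 2 else 0)
      = a ^ 2 * (if G.Adj x y then (g x - g y) ^ 2 else 0) := by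
    intro x y
    split <;> ring
  simp only [energy, hterm, ← Finset.mul_sum]
  ring

theorem energy_sub_const (c : ℝ) (f : V → ℝ) :
    energy G (fun x => f x - c) = energy G f := by
  simpa [sub_eq_add_neg] using energy_affine G 1 (-c) f

theorem steklovQuotientSet_pair {u v : V} [DecidableEq V] (huv : u ≠ v) :
    steklovQuotientSet G {u, v} = (2 : ℝ) • dirichletEnergySet G u v := by
  ext r
  simp only [steklovQuotientSet, dirichletEnergySet, Set.mem_ofPred_eq, Set.mem_smul_set,
    smul_eq_mul, Finset.sum_pair huv, Finset.mem_insert, Finset.mem_singleton]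
  constructor
  · rintro ⟨g, hsum, ⟨x, hx, hgx⟩, rfl⟩
    have hgv : g v = -g u := by linarith
    have hgu : g u ≠ 0 := by
      rcases hx with rfl | rfl
      · exact hgx
      · rintro h
        simp [hgv, h] at hgx
    set f : V → ℝ := fun x => (2 * g u)⁻¹ * g x + 2⁻¹
    refine ⟨energy G f, ⟨f, ?_, ?_, rfl⟩, ?_⟩
    · simp only [f]
      field_simp
      ring
    · simp only [f, hgv]
      field_simp
      ring
    · rw [energy_affine, hgv]
      field_simp
      ring
  · rintro ⟨_, ⟨f, hfu, hfv, rfl⟩, rfl⟩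
    refine ⟨fun x => f x - 2⁻¹, ?_, ⟨u, Or.inl rfl, ?_⟩, ?_⟩
    · simp only [hfu, hfv]
      norm_num
    · simp only [hfu]
      norm_num
    · simp only [energy_sub_const, hfu, hfv]
      ring

theorem lambda2_pair {u v : V} [DecidableEq V] (huv : u ≠ v) :
    lambda2 G {u, v} = 2 * sInf (dirichletEnergySet G u v) := by
  rw [lambda2_eq_sInf, steklovQuotientSet_pair G huv,
    Real.sInf_smul_of_nonneg zero_le_two, smul_eq_mul]

end

theorem stmt7_general [Fintype V] [DecidableEq V] (G : SimpleGraph V) [DecidableRel G.Adj]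
    (u v : V) (huv : u ≠ v) :
    effRes G u v = 2 / lambda2 G {u, v} := by
  rw [lambda2_pair G huv, div_mul_cancel_left₀ two_ne_zero, effRes_eq_inv_sInf]

/-- In a finite connected unit electrical network, the effective resistance between
two distinct vertices `u, v` equals `2 / λ₂(G, {u, v})`. -/
theorem stmt7 [Fintype V] [DecidableEq V] (G : SimpleGraph V) [DecidableRel G.Adj]
    (hG : G.Connected) (u v : V) (huv : u ≠ v) :
    effRes G u v = 2 / lambda2 G {u, v} :=
  stmt7_general G u v huv
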